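/- arXiv:1808.03821 — 3 statements merged into one kernel-verified Lean document; each statement's English description precedes it below -/
import Mathlib

section
/- Let μ be a function on finite subsets of a set V that is non-negative and additive over disjoint unions. If E₂ ⊆ V satisfies μ(E₂) ≤ μ(E₂ ⊕ E) for all E in a fixed collection C ⊆ P(V), then every subset E₁ ⊆ E₂ also satisfies μ(E₁) ≤ μ(E₁ ⊕ E) for all E ∈ C. -/
/-!
Flipping a set `E` changes the weight of `X` by `μ (E \ X) - μ (X ∩ E)`. Since an additive,
non-negative `μ` is monotone, this change can only grow when `X` shrinks, so a set that no flip
improves passes this property on to all its subsets.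
-/

namespace Finset

variable {V : Type*} [DecidableEq V] {μ : Finset V → ℝ}

theorem monotone_of_additive_of_nonneg
    (hadd : ∀ X Y : Finset V, Disjoint X Y → μ (X ∪ Y) = μ X + μ Y)
    (hnn : ∀ X : Finset V, 0 ≤ μ X) : Monotone μ := by
  intro X Y hXY
  have hsplit : μ Y = μ X + μ (Y \ X) := by
    rw [← hadd _ _ disjoint_sdiff, union_sdiff_of_subset hXY]
  linarith [hnn (Y \ X)]

theorem symmDiff_add_inter_of_additive
    (hadd : ∀ X Y : Finset V, Disjoint X Y → μ (X ∪ Y) = μ X + μ Y) (X E : Finset V) :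
    μ (symmDiff X E) + μ (X ∩ E) = μ X + μ (E \ X) := by
  have hX : μ X = μ (X \ E) + μ (X ∩ E) := by
    rw [← hadd _ _ (disjoint_sdiff_inter X E), sdiff_union_inter]
  have hXE : μ (symmDiff X E) = μ (X \ E) + μ (E \ X) := by
    rw [symmDiff_def, sup_eq_union, hadd _ _ disjoint_sdiff_sdiff]
  linarith

end Finset

theorem subset_of_reduced_is_reduced {V : Type*} [DecidableEq V]
    (μ : Finset V → ℝ)
    (hadd : ∀ X Y : Finset V, Disjoint X Y → μ (X ∪ Y) = μ X + μ Y)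
    (hnn : ∀ X : Finset V, 0 ≤ μ X)
    (C : Set (Finset V)) (E₁ E₂ : Finset V) (hsub : E₁ ⊆ E₂)
    (hmin : ∀ E ∈ C, μ E₂ ≤ μ (symmDiff E₂ E)) :
    ∀ E ∈ C, μ E₁ ≤ μ (symmDiff E₁ E) := by
  intro E hE
  have hmono := Finset.monotone_of_additive_of_nonneg hadd hnn
  have hinter : μ (E₁ ∩ E) ≤ μ (E₂ ∩ E) := hmono (Finset.inter_subset_inter_right hsub)
  have hsdiff : μ (E \ E₂) ≤ μ (E \ E₁) := hmono (Finset.sdiff_subset_sdiff le_rfl hsub)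
  linarith [hmin E hE, Finset.symmDiff_add_inter_of_additive hadd E₁ E,
    Finset.symmDiff_add_inter_of_additive hadd E₂ E]
end

section
/- Let V and C_X be finite sets, Γ_X : V → P(C_X) with |Γ_X(v)| ≤ d_B for all v, and let D be a random subset of C_X satisfying ℙ[T ⊆ D] ≤ q^{|T|} for all T ⊆ C_X, with 0 < q < 1. Fix W ⊆ V and c₀ > 0, and let p₁ := 2^{d_B h(1/(d_B c₀))} q^{1/c₀} where h is binary entropy; assume p₁ < 1. Then ℙ[|W| ≤ c₀ |D ∩ Γ_X(W)|] ≤ p₁^{|W|} / (1 − p₁^{c₀}). -/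
/-- The binary entropy function, with `h 0 = h 1 = 0` (using `Real.logb 2 0 = 0`). -/
noncomputable def binH (x : ℝ) : ℝ :=
  -(x * Real.logb 2 x) - (1 - x) * Real.logb 2 (1 - x)

/-!
Writing `Γ = Γ_X(W)`, `n = |Γ| ≤ d_B |W|` and `x = 1 / (d_B c₀)`, the event `|W| ≤ c₀ |D ∩ Γ|`
forces `D` to contain some `T ⊆ Γ` with `c₀ |T| ≥ |W|`, so a union bound gives at most
`∑_{k ≥ |W|/c₀} C(n, k) q^k`. For such `k` we have `n x ≤ k`, and then
`C(n, k) ≤ 2^{k h(x)/x}`; since `p₁^{c₀} = 2^{h(x)/x} q`, each term is at most `(p₁^{c₀})^k`,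
and the geometric tail starting at `⌈|W|/c₀⌉` is at most `p₁^{|W|} / (1 - p₁^{c₀})`.
-/

open Finset

lemma choose_mul_pow_mul_one_sub_pow_le_one {x : ℝ} (hx0 : 0 ≤ x) (hx1 : x ≤ 1) {n k : ℕ}
    (hk : k ≤ n) : (n.choose k : ℝ) * (x ^ k * (1 - x) ^ (n - k)) ≤ 1 := by
  have hsum : ∑ i ∈ range (n + 1), x ^ i * (1 - x) ^ (n - i) * (n.choose i : ℝ) = 1 := by
    rw [← add_pow, add_sub_cancel, one_pow]
  refine le_of_le_of_eq ?_ hsum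
  rw [mul_comm]
  refine single_le_sum (f := fun i => x ^ i * (1 - x) ^ (n - i) * (n.choose i : ℝ))
    (fun i _ => ?_) (mem_range.mpr (Nat.lt_succ_of_le hk))
  have : 0 ≤ 1 - x := by linarith
  positivity

lemma binH_div_mul_log_two {x : ℝ} (hx : 0 < x) :
    binH x / x * Real.log 2 = -Real.log x - (1 - x) / x * Real.log (1 - x) := by
  simp only [binH, Real.logb]
  field_simp

lemma choose_le_two_rpow_binH_div_pow {x : ℝ} (hx : 0 < x) {n k : ℕ} (hk : k ≤ n)
    (hnx : n * x ≤ k) : (n.choose k : ℝ) ≤ (2 ^ (binH x / x)) ^ k := by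
  -- `C(n, k) ≤ x^{-k} (1 - x)^{-(n-k)}` by the binomial theorem, and `n - k ≤ k (1 - x) / x`.
  rcases lt_or_ge x 1 with hx1 | hx1
  · have hy : 0 < 1 - x := by linarith
    have hsub : ((n - k : ℕ) : ℝ) ≤ k * ((1 - x) / x) := by
      rw [Nat.cast_sub hk, mul_div_assoc', le_div_iff₀ hx]
      linarith
    have hlog : Real.log (1 - x) < 0 := Real.log_neg hy (by linarith)
    calc (n.choose k : ℝ) ≤ 1 / (x ^ k * (1 - x) ^ (n - k)) := by
          rw [le_div_iff₀ (by positivity)]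
          exact choose_mul_pow_mul_one_sub_pow_le_one hx.le hx1.le hk
      _ ≤ (2 ^ (binH x / x)) ^ k := by
          rw [← Real.log_le_log_iff (by positivity) (by positivity), one_div, Real.log_inv,
            Real.log_mul (by positivity) (by positivity), Real.log_pow, Real.log_pow, Real.log_pow,
            Real.log_rpow two_pos, binH_div_mul_log_two hx]
          nlinarith [mul_le_mul_of_nonpos_right hsub hlog.le]
  · obtain rfl : k = n := le_antisymm hk (by exact_mod_cast (by nlinarith : (n : ℝ) ≤ k))
    rcases Nat.eq_zero_or_pos k with rfl | hk0
    · simp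
    obtain rfl : x = 1 := le_antisymm (by
      have : (0 : ℝ) < k := by exact_mod_cast hk0
      nlinarith) hx1
    simp [binH]

lemma sum_filter_inter_le_sum_powerset_filter {α : Type*} [Fintype α] [DecidableEq α]
    {μ : Finset α → ℝ} (hμ : ∀ A, 0 ≤ μ A) {f : Finset α → ℝ}
    (hf : ∀ T, ∑ A ∈ univ.filter (T ⊆ ·), μ A ≤ f T) (Γ : Finset α)
    (P : Finset α → Prop) [DecidablePred P] :
    ∑ A ∈ univ.filter (fun A => P (A ∩ Γ)), μ A ≤ ∑ T ∈ Γ.powerset.filter P, f T := by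
  have hmaps : ∀ A ∈ univ.filter (fun A => P (A ∩ Γ)), A ∩ Γ ∈ Γ.powerset.filter P := by
    intro A hA
    simp only [mem_filter, mem_univ, true_and] at hA
    exact mem_filter.mpr ⟨mem_powerset.mpr inter_subset_right, hA⟩
  rw [← sum_fiberwise_of_maps_to hmaps]
  refine sum_le_sum fun T _ => (sum_le_sum_of_subset_of_nonneg ?_ fun A _ _ => hμ A).trans (hf T)
  intro A hA
  simp only [mem_filter, mem_univ, true_and] at hA ⊢
  exact hA.2 ▸ inter_subset_left

lemma sum_powerset_filter_card_eq {β : Type*} (Γ : Finset β) (P : ℕ → Prop) [DecidablePred P]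
    (g : ℕ → ℝ) :
    ∑ T ∈ Γ.powerset.filter (fun T => P T.card), g T.card
      = ∑ k ∈ (range (Γ.card + 1)).filter P, (Γ.card.choose k : ℝ) * g k := by
  rw [sum_filter, sum_filter, sum_powerset_apply_card (fun k => if P k then g k else 0)]
  refine sum_congr rfl fun k _ => ?_
  split_ifs <;> simp

lemma sum_filter_le_rpow_div_one_sub {p c m : ℝ} (hp0 : 0 < p) (hp1 : p < 1) (hc : 0 < c)
    {N : ℕ} {a : ℕ → ℝ} (ha : ∀ k < N, m ≤ c * k → a k ≤ (p ^ c) ^ k) :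
    ∑ k ∈ (range N).filter (fun k : ℕ => m ≤ c * k), a k ≤ p ^ m / (1 - p ^ c) := by
  set s := p ^ c
  set k₀ := ⌈m / c⌉₊
  have hs0 : 0 ≤ s := by positivity
  have hs1 : s < 1 := Real.rpow_lt_one hp0.le hp1 hc
  have hfilter : (range N).filter (fun k : ℕ => m ≤ c * k) ⊆ Ico k₀ N := by
    intro k hk
    simp only [mem_filter, mem_range] at hk
    refine mem_Ico.mpr ⟨Nat.ceil_le.mpr ?_, hk.1⟩
    rw [div_le_iff₀ hc]
    linarith [hk.2]
  have hk₀ : s ^ k₀ ≤ p ^ m := by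
    rw [← Real.rpow_natCast, ← Real.rpow_mul hp0.le]
    refine Real.rpow_le_rpow_of_exponent_ge hp0 hp1.le ?_
    have := Nat.le_ceil (m / c)
    rw [div_le_iff₀ hc] at this
    linarith
  calc ∑ k ∈ (range N).filter (fun k : ℕ => m ≤ c * k), a k
      ≤ ∑ k ∈ (range N).filter (fun k : ℕ => m ≤ c * k), s ^ k :=
        sum_le_sum fun k hk => ha k (mem_range.mp (mem_filter.mp hk).1) (mem_filter.mp hk).2
    _ ≤ ∑ k ∈ Ico k₀ N, s ^ k := sum_le_sum_of_subset_of_nonneg hfilter fun _ _ _ => by positivity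
    _ ≤ s ^ k₀ / (1 - s) := geom_sum_Ico_le_of_lt_one hs0 hs1
    _ ≤ p ^ m / (1 - s) := by gcongr

theorem witness_probability_bound_general {V CX : Type*} [Fintype CX]
    [DecidableEq CX]
    (μ : Finset CX → ℝ) (hμnn : ∀ A, 0 ≤ μ A)
    (ΓX : V → Finset CX) (dB : ℕ) (hdB : 1 ≤ dB)
    (hΓ : ∀ v : V, (ΓX v).card ≤ dB)
    (q : ℝ) (hq0 : 0 < q)
    (hls : ∀ T : Finset CX,
      ∑ A ∈ Finset.univ.filter (fun A : Finset CX => T ⊆ A), μ A ≤ q ^ T.card)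
    (W : Finset V) (c₀ : ℝ) (hc₀ : 0 < c₀)
    (p₁ : ℝ) (hp₁def : p₁ = 2 ^ ((dB : ℝ) * binH (1 / ((dB : ℝ) * c₀))) * q ^ (1 / c₀))
    (hp₁ : p₁ < 1) :
    ∑ A ∈ Finset.univ.filter
        (fun A : Finset CX => (W.card : ℝ) ≤ c₀ * ((A ∩ W.biUnion ΓX).card : ℝ)), μ A
      ≤ p₁ ^ (W.card : ℝ) / (1 - p₁ ^ c₀) := by
  set Γ := W.biUnion ΓX
  set x : ℝ := 1 / (dB * c₀)
  have hdB₀ : (0 : ℝ) < dB := by exact_mod_cast hdB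
  have hp₁₀ : 0 < p₁ := hp₁def ▸ by positivity
  have hs : p₁ ^ c₀ = 2 ^ (binH x / x) * q := by
    rw [hp₁def, Real.mul_rpow (by positivity) (by positivity), ← Real.rpow_mul zero_le_two,
      ← Real.rpow_mul hq0.le, one_div_mul_cancel hc₀.ne', Real.rpow_one]
    congr 2
    simp only [x]
    field_simp
  have hΓ_card : (Γ.card : ℝ) ≤ dB * W.card := by
    rw [mul_comm]
    exact_mod_cast card_biUnion_le_card_mul W ΓX dB fun v _ => hΓ v
  calc _ ≤ ∑ T ∈ Γ.powerset.filter (fun T => (W.card : ℝ) ≤ c₀ * T.card), q ^ T.card :=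
        sum_filter_inter_le_sum_powerset_filter hμnn hls Γ fun T => (W.card : ℝ) ≤ c₀ * T.card
    _ = ∑ k ∈ (range (Γ.card + 1)).filter (fun k : ℕ => (W.card : ℝ) ≤ c₀ * k),
          (Γ.card.choose k : ℝ) * q ^ k :=
        sum_powerset_filter_card_eq Γ (fun k : ℕ => (W.card : ℝ) ≤ c₀ * k) (q ^ ·)
    _ ≤ p₁ ^ (W.card : ℝ) / (1 - p₁ ^ c₀) := by
        refine sum_filter_le_rpow_div_one_sub hp₁₀ hp₁ hc₀ fun k hk hWk => ?_
        rw [hs, mul_pow]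
        gcongr
        refine choose_le_two_rpow_binH_div_pow (by positivity) (Nat.lt_succ_iff.mp hk) ?_
        calc (Γ.card : ℝ) * x ≤ dB * W.card * x := by gcongr
          _ = W.card / c₀ := by simp only [x]; field_simp
          _ ≤ k := by rw [div_le_iff₀ hc₀]; linarith

theorem witness_probability_bound {V CX : Type*} [Fintype V] [Fintype CX]
    [DecidableEq V] [DecidableEq CX]
    (μ : Finset CX → ℝ) (hμnn : ∀ A, 0 ≤ μ A) (hμ1 : ∑ A : Finset CX, μ A = 1)
    (ΓX : V → Finset CX) (dB : ℕ) (hdB : 1 ≤ dB)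
    (hΓ : ∀ v : V, (ΓX v).card ≤ dB)
    (q : ℝ) (hq0 : 0 < q) (hq1 : q < 1)
    (hls : ∀ T : Finset CX,
      ∑ A ∈ Finset.univ.filter (fun A : Finset CX => T ⊆ A), μ A ≤ q ^ T.card)
    (W : Finset V) (c₀ : ℝ) (hc₀ : 0 < c₀)
    (p₁ : ℝ) (hp₁def : p₁ = 2 ^ ((dB : ℝ) * binH (1 / ((dB : ℝ) * c₀))) * q ^ (1 / c₀))
    (hp₁ : p₁ < 1) :
    ∑ A ∈ Finset.univ.filter
        (fun A : Finset CX => (W.card : ℝ) ≤ c₀ * ((A ∩ W.biUnion ΓX).card : ℝ)), μ A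
      ≤ p₁ ^ (W.card : ℝ) / (1 - p₁ ^ c₀) :=
  witness_probability_bound_general μ hμnn ΓX dB hdB hΓ q hq0 hls W c₀ hc₀ p₁ hp₁def hp₁
end

section
/- Let H be an n_B × n_A binary matrix, and define H_X = (I_{n_A} ⊗ H, Hᵀ ⊗ I_{n_B}) and H_Z = (H ⊗ I_{n_A}, I_{n_B} ⊗ Hᵀ) as block matrices over 𝔽₂. Then H_X · H_Zᵀ = 0. -/
open Kronecker Matrix

namespace Matrix

variable {R : Type*} [CommSemiring R] {l m p q : Type*}

theorem one_kronecker_mul_kronecker_one [Fintype l] [Fintype q] [DecidableEq l] [DecidableEq q]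
    (A : Matrix l m R) (B : Matrix p q R) :
    ((1 : Matrix l l R) ⊗ₖ B) * (A ⊗ₖ (1 : Matrix q q R)) = A ⊗ₖ B := by
  rw [← mul_kronecker_mul, Matrix.one_mul, Matrix.mul_one]

theorem kronecker_one_mul_one_kronecker [Fintype m] [Fintype p] [DecidableEq m] [DecidableEq p]
    (A : Matrix l m R) (B : Matrix p q R) :
    (A ⊗ₖ (1 : Matrix p p R)) * ((1 : Matrix m m R) ⊗ₖ B) = A ⊗ₖ B := by
  rw [← mul_kronecker_mul, Matrix.one_mul, Matrix.mul_one]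

theorem transpose_kronecker (A : Matrix l m R) (B : Matrix p q R) : (A ⊗ₖ B)ᵀ = Aᵀ ⊗ₖ Bᵀ :=
  (kroneckerMap_transpose _ A B).symm

theorem fromCols_one_kronecker_mul_transpose_fromCols_kronecker_one
    [Fintype m] [Fintype l] [DecidableEq m] [DecidableEq l] (H : Matrix m l R) :
    fromCols ((1 : Matrix l l R) ⊗ₖ H) (Hᵀ ⊗ₖ (1 : Matrix m m R)) *
        (fromCols (H ⊗ₖ (1 : Matrix l l R)) ((1 : Matrix m m R) ⊗ₖ Hᵀ))ᵀ =
      Hᵀ ⊗ₖ H + Hᵀ ⊗ₖ H := by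
  rw [transpose_fromCols, fromCols_mul_fromRows, transpose_kronecker, transpose_kronecker,
    transpose_one, transpose_one, transpose_transpose, one_kronecker_mul_kronecker_one,
    kronecker_one_mul_one_kronecker]

end Matrix

theorem hypergraph_product_css_orthogonality (nA nB : ℕ)
    (H : Matrix (Fin nB) (Fin nA) (ZMod 2)) :
    Matrix.fromCols ((1 : Matrix (Fin nA) (Fin nA) (ZMod 2)) ⊗ₖ H)
        (Hᵀ ⊗ₖ (1 : Matrix (Fin nB) (Fin nB) (ZMod 2))) *
      (Matrix.fromCols (H ⊗ₖ (1 : Matrix (Fin nA) (Fin nA) (ZMod 2)))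
        ((1 : Matrix (Fin nB) (Fin nB) (ZMod 2)) ⊗ₖ Hᵀ))ᵀ = 0 := by
  rw [fromCols_one_kronecker_mul_transpose_fromCols_kronecker_one]
  ext i j
  exact CharTwo.add_self_eq_zero _
end
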